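/- arXiv:math-ph/0407043 — 7 statements merged into one kernel-verified Lean document; each statement's English description precedes it below -/
import Mathlib

section
/- For every integer k ≥ 1, the polynomials satisfy V_{-k-1}(z) − V_{-k}(z) = z·V_k(z). -/
open Finset

/-- `Vpos k z` is the polynomial `V_k(z) = Σ_{j=0}^{2k} C(k+⌊j/2⌋, j) z^j`. -/
noncomputable def Vpos (k : ℕ) (z : ℂ) : ℂ :=
  ∑ j ∈ Finset.range (2 * k + 1), (Nat.choose (k + j / 2) j : ℂ) * z ^ j

/-- `Vneg k z` is the polynomial `V_{-k}(z) = 1 + Σ_{j=1}^{2k-1} C(k+⌊(j-1)/2⌋, j) z^j`. -/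
noncomputable def Vneg (k : ℕ) (z : ℂ) : ℂ :=
  1 + ∑ j ∈ Finset.Icc 1 (2 * k - 1), (Nat.choose (k + (j - 1) / 2) j : ℂ) * z ^ j

theorem stmt_1 (k : ℕ) (hk : 1 ≤ k) (z : ℂ) :
    Vneg (k + 1) z - Vneg k z = z * Vpos k z := by
  obtain ⟨m, rfl⟩ := Nat.exists_eq_add_of_le hk
  set K := 1 + m with hK
  unfold Vneg Vpos
  have h1 : 2 * (K + 1) - 1 = 2 * K + 1 := by omega
  have h2 : 2 * K - 1 + 1 - 1 = 2 * K - 1 := by omega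
  have h3 : 2 * K + 1 + 1 - 1 = 2 * K + 1 := by omega
  rw [h1, ← Finset.Ico_add_one_right_eq_Icc, ← Finset.Ico_add_one_right_eq_Icc, Finset.sum_Ico_eq_sum_range,
    Finset.sum_Ico_eq_sum_range, h2, h3]
  have hext : ∑ i ∈ Finset.range (2 * K - 1),
      (Nat.choose (K + (1 + i - 1) / 2) (1 + i) : ℂ) * z ^ (1 + i)
      = ∑ i ∈ Finset.range (2 * K + 1),
      (Nat.choose (K + (1 + i - 1) / 2) (1 + i) : ℂ) * z ^ (1 + i) := by
    have h4 : 2 * K + 1 = (2 * K - 1) + 1 + 1 := by omega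
    rw [h4, Finset.sum_range_succ, Finset.sum_range_succ]
    have e1 : Nat.choose (K + (1 + (2 * K - 1) - 1) / 2) (1 + (2 * K - 1)) = 0 := by
      apply Nat.choose_eq_zero_of_lt; omega
    have e2 : Nat.choose (K + (1 + (2 * K - 1 + 1) - 1) / 2) (1 + (2 * K - 1 + 1)) = 0 := by
      apply Nat.choose_eq_zero_of_lt; omega
    rw [e1, e2]
    push_cast
    ring
  rw [hext, Finset.mul_sum]
  rw [add_sub_add_left_eq_sub, ← Finset.sum_sub_distrib]
  apply Finset.sum_congr rfl
  intro i _
  have hd : (1 + i - 1) / 2 = i / 2 := by omega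
  have hP : Nat.choose (K + 1 + (1 + i - 1) / 2) (1 + i)
      = Nat.choose (K + (1 + i - 1) / 2) (1 + i) + Nat.choose (K + i / 2) i := by
    rw [hd]
    have : K + 1 + i / 2 = (K + i / 2) + 1 := by omega
    rw [this, add_comm 1 i, Nat.choose_succ_succ']; ring
  rw [hP]
  push_cast
  ring
end

section
/- For every integer p ≥ 1, the polynomials V_k satisfy the three-term recurrence V_{p+1}(z) − (z² + 2)·V_p(z) + V_{p-1}(z) = 0. -/
open Finset

lemma key (n j : ℕ) :
    (n+2).choose (j+2) + n.choose (j+2) = n.choose j + 2 * (n+1).choose (j+2) := by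
  rw [show n+2 = (n+1)+1 from rfl, show j+2 = (j+1)+1 from rfl,
      Nat.choose_succ_succ (n+1) (j+1), Nat.choose_succ_succ n j, Nat.choose_succ_succ n (j+1)]
  ring


theorem stmt_2 (p : ℕ) (hp : 1 ≤ p) (z : ℂ) :
    Vpos (p + 1) z - (z ^ 2 + 2) * Vpos p z + Vpos (p - 1) z = 0 := by
  obtain ⟨q, rfl⟩ : ∃ q, p = q + 1 := ⟨p - 1, by omega⟩
  simp only [Nat.add_sub_cancel]
  unfold Vpos
  have hz : ∀ n j : ℕ, 2 * n < j → (Nat.choose (n + j / 2) j : ℂ) = 0 := by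
    intro n j h
    rw [Nat.choose_eq_zero_of_lt (by omega)]
    simp
  have e1 : ∑ j ∈ range (2*(q+1)+1), (Nat.choose ((q+1) + j/2) j : ℂ) * z^j
      = ∑ j ∈ range (2*(q+1+1)+1), (Nat.choose ((q+1) + j/2) j : ℂ) * z^j := by
    apply Finset.sum_subset
    · intro x hx; simp only [mem_range] at *; omega
    · intro x _ hx; simp only [mem_range, not_lt] at hx
      rw [hz _ _ (by omega)]; ring
  have e0 : ∑ j ∈ range (2*q+1), (Nat.choose (q + j/2) j : ℂ) * z^j
      = ∑ j ∈ range (2*(q+1+1)+1), (Nat.choose (q + j/2) j : ℂ) * z^j := by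
    apply Finset.sum_subset
    · intro x hx; simp only [mem_range] at *; omega
    · intro x _ hx; simp only [mem_range, not_lt] at hx
      rw [hz _ _ (by omega)]; ring
  have e2 : z^2 * ∑ j ∈ range (2*(q+1)+1), (Nat.choose ((q+1) + j/2) j : ℂ) * z^j
      = ∑ j ∈ range (2*(q+1+1)+1),
          (if 2 ≤ j then (Nat.choose ((q+1) + (j-2)/2) (j-2) : ℂ) else 0) * z^j := by
    conv_rhs => rw [show 2*(q+1+1)+1 = (2*(q+1)+1) + 1 + 1 from by ring,
      Finset.sum_range_succ', Finset.sum_range_succ']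
    norm_num [Finset.mul_sum]
    apply Finset.sum_congr rfl
    intro j _
    rw [show j+1+1-2 = j from rfl]; ring
  have main : (∑ j ∈ range (2*(q+1+1)+1), (Nat.choose ((q+1+1) + j/2) j : ℂ) * z^j)
      - (∑ j ∈ range (2*(q+1+1)+1),
          (if 2 ≤ j then (Nat.choose ((q+1) + (j-2)/2) (j-2) : ℂ) else 0) * z^j)
      - 2 * (∑ j ∈ range (2*(q+1+1)+1), (Nat.choose ((q+1) + j/2) j : ℂ) * z^j)
      + (∑ j ∈ range (2*(q+1+1)+1), (Nat.choose (q + j/2) j : ℂ) * z^j) = 0 := by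
    rw [Finset.mul_sum, ← Finset.sum_sub_distrib, ← Finset.sum_sub_distrib,
      ← Finset.sum_add_distrib]
    apply Finset.sum_eq_zero
    intro j _
    rcases j with _ | _ | j
    · norm_num
    · norm_num [Nat.choose_one_right]; ring
    · have hdiv : (j+1+1) / 2 = j/2 + 1 := by omega
      simp only [hdiv, show (j+1+1) - 2 = j from rfl, show (2:ℕ) ≤ j+1+1 from by omega, if_true]
      have hc : ((q + 1 + j/2 + 2).choose (j+2) : ℂ) + ((q + 1 + j/2).choose (j+2) : ℂ)
          = ((q + 1 + j/2).choose j : ℂ) + 2 * (((q + 1 + j/2 + 1).choose (j+2) : ℂ)) := by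
        exact_mod_cast congrArg (Nat.cast : ℕ → ℂ) (key (q + 1 + j/2) j)
      have h1 : q + 1 + 1 + (j/2 + 1) = q + 1 + j/2 + 2 := by ring
      have h2 : q + 1 + (j/2 + 1) = q + 1 + j/2 + 1 := by ring
      have h3 : q + (j/2 + 1) = q + 1 + j/2 := by ring
      rw [h1, h2, h3]
      have hpow : z^(j+1+1) = z^j * z^2 := by ring
      rw [hpow]
      linear_combination (z^j * z^2) * hc
  linear_combination main - e2 - 2*e1 + e0
end

section
/- For every integer p ≥ 1, the polynomials V_{-k} satisfy the three-term recurrence V_{-p-1}(z) − (z² + 2)·V_{-p}(z) + V_{-p+1}(z) = 0. -/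
open Finset

/-- A Pascal-type identity: `C(n+2,s+2) + C(n,s+2) = 2·C(n+1,s+2) + C(n,s)`. -/
lemma pascal2 (n s : ℕ) :
    (n + 2).choose (s + 2) + n.choose (s + 2)
      = 2 * (n + 1).choose (s + 2) + n.choose s := by
  have h1 : (n + 2).choose (s + 2) = (n + 1).choose (s + 1) + (n + 1).choose (s + 2) :=
    Nat.choose_succ_succ (n + 1) (s + 1)
  have h2 : (n + 1).choose (s + 2) = n.choose (s + 1) + n.choose (s + 2) :=
    Nat.choose_succ_succ n (s + 1)
  have h3 : (n + 1).choose (s + 1) = n.choose s + n.choose (s + 1) :=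
    Nat.choose_succ_succ n s
  omega

/-- The coefficients of `Vneg k` vanish for `j ≥ max(1, 2k)`. -/
lemma bzero (k j : ℕ) (h1 : 1 ≤ j) (h2 : 2 * k ≤ j) :
    (k + (j - 1) / 2).choose j = 0 :=
  Nat.choose_eq_zero_of_lt (by omega)

/-- The key coefficient recurrence. -/
lemma coeffM (p j : ℕ) (hp : 1 ≤ p) (hj : 2 ≤ j) :
    (p + 1 + (j - 1) / 2).choose j + (p - 1 + (j - 1) / 2).choose j
      = 2 * (p + (j - 1) / 2).choose j + (p + (j - 3) / 2).choose (j - 2) := by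
  obtain ⟨q, rfl⟩ : ∃ q, p = q + 1 := ⟨p - 1, by omega⟩
  rcases Nat.even_or_odd j with ⟨m, hm⟩ | ⟨m, hm⟩
  · obtain ⟨r, rfl⟩ : ∃ r, m = r + 1 := ⟨m - 1, by omega⟩
    subst hm
    rcases Nat.eq_zero_or_pos r with rfl | hr
    · have h := pascal2 q 0
      simp only [Nat.choose_zero_right] at h
      have e1 : (0 + 1 + (0 + 1) - 1) / 2 = 0 := rfl
      have e3 : 0 + 1 + (0 + 1) - 2 = 0 := rfl
      rw [e1, e3, Nat.choose_zero_right]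
      have e4 : q + 1 + 1 + 0 = q + 2 := by omega
      have e5 : q + 1 - 1 + 0 = q := by omega
      have e6 : q + 1 + 0 = q + 1 := by omega
      rw [e4, e5, e6]
      have e7 : 0 + 1 + (0 + 1) = 0 + 2 := rfl
      rw [e7]
      omega
    · obtain ⟨t, rfl⟩ : ∃ t, r = t + 1 := ⟨r - 1, by omega⟩
      have e1 : (t + 1 + 1 + (t + 1 + 1) - 1) / 2 = t + 1 := by omega
      have e2 : (t + 1 + 1 + (t + 1 + 1) - 3) / 2 = t := by omega
      have e3 : t + 1 + 1 + (t + 1 + 1) - 2 = 2 * t + 2 := by omega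
      rw [e1, e2, e3]
      have e8 : t + 1 + 1 + (t + 1 + 1) = (2 * t + 2) + 2 := by omega
      rw [e8]
      have e4 : q + 1 + 1 + (t + 1) = q + t + 1 + 2 := by omega
      have e5 : q + 1 - 1 + (t + 1) = q + t + 1 := by omega
      have e6 : q + 1 + (t + 1) = q + t + 1 + 1 := by omega
      have e7 : q + 1 + t = q + t + 1 := by omega
      rw [e4, e5, e6, e7]
      exact pascal2 (q + t + 1) (2 * t + 2)
  · subst hm
    obtain ⟨t, rfl⟩ : ∃ t, m = t + 1 := ⟨m - 1, by omega⟩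
    have e1 : (2 * (t + 1) + 1 - 1) / 2 = t + 1 := by omega
    have e2 : (2 * (t + 1) + 1 - 3) / 2 = t := by omega
    have e3 : 2 * (t + 1) + 1 - 2 = 2 * t + 1 := by omega
    rw [e1, e2, e3]
    have e8 : 2 * (t + 1) + 1 = (2 * t + 1) + 2 := by omega
    rw [e8]
    have e4 : q + 1 + 1 + (t + 1) = q + t + 1 + 2 := by omega
    have e5 : q + 1 - 1 + (t + 1) = q + t + 1 := by omega
    have e6 : q + 1 + (t + 1) = q + t + 1 + 1 := by omega
    have e7 : q + 1 + t = q + t + 1 := by omega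
    rw [e4, e5, e6, e7]
    exact pascal2 (q + t + 1) (2 * t + 1)

/-- `Vneg k z` written as a sum over an arbitrarily long initial range. -/
lemma Vrange (k N : ℕ) (h : 2 * k ≤ N) (z : ℂ) :
    Vneg k z = ∑ j ∈ Finset.range (N + 1),
      ((k + (j - 1) / 2).choose j : ℂ) * z ^ j := by
  rw [Vneg, Finset.range_eq_Ico, Finset.sum_eq_sum_Ico_succ_bot (by omega)]
  simp only [Finset.Ico_add_one_right_eq_Icc]
  have h0 : ((k + (0 - 1) / 2).choose 0 : ℂ) * z ^ 0 = 1 := by simp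
  rw [h0]
  congr 1
  refine Finset.sum_subset ?_ ?_
  · intro j hj
    simp only [Finset.mem_Icc] at hj ⊢
    omega
  · intro j hj hnj
    simp only [Finset.mem_Icc] at hj hnj
    rw [bzero k j (by omega) (by omega)]
    simp

theorem stmt_3 (p : ℕ) (hp : 1 ≤ p) (z : ℂ) :
    Vneg (p + 1) z - (z ^ 2 + 2) * Vneg p z + Vneg (p - 1) z = 0 := by
  rw [Vrange (p + 1) (2 * p + 5) (by omega) z, Vrange p (2 * p + 5) (by omega) z,
    Vrange (p - 1) (2 * p + 5) (by omega) z]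
  set g : ℕ → ℂ :=
    fun j => if 2 ≤ j then ((p + (j - 2 - 1) / 2).choose (j - 2) : ℂ) else 0 with hg
  have key : z ^ 2 * ∑ j ∈ Finset.range (2 * p + 5 + 1),
        ((p + (j - 1) / 2).choose j : ℂ) * z ^ j
      = ∑ j ∈ Finset.range (2 * p + 5 + 1), g j * z ^ j := by
    rw [Finset.mul_sum]
    have hz5 : ((p + (2 * p + 5 - 1) / 2).choose (2 * p + 5) : ℂ) = 0 := by
      rw [bzero p (2 * p + 5) (by omega) (by omega)]; simp
    have hz4 : ((p + (2 * p + 4 - 1) / 2).choose (2 * p + 4) : ℂ) = 0 := by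
      rw [bzero p (2 * p + 4) (by omega) (by omega)]; simp
    rw [Finset.sum_range_succ, Finset.sum_range_succ, hz5, hz4]
    rw [show (2 * p + 5 + 1) = (2 * p + 4) + 1 + 1 from rfl]
    rw [Finset.sum_range_succ' (fun j => g j * z ^ j),
      Finset.sum_range_succ' (fun j => g (j + 1) * z ^ (j + 1))]
    have hg0 : g 0 = 0 := by simp [hg]
    have hg1 : g 1 = 0 := by simp [hg]
    rw [hg0, hg1]
    simp only [zero_mul, add_zero, mul_zero]
    refine Finset.sum_congr rfl fun j hj => ?_
    have hgj : g (j + 1 + 1) = ((p + (j - 1) / 2).choose j : ℂ) := by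
      simp [hg]
    rw [hgj]
    ring
  rw [add_mul, key, Finset.mul_sum, ← Finset.sum_add_distrib, ← Finset.sum_sub_distrib,
    ← Finset.sum_add_distrib]
  refine Finset.sum_eq_zero fun j hj => ?_
  rcases Nat.lt_or_ge j 2 with hj2 | hj2
  · interval_cases j
    · have hg0 : g 0 = 0 := by simp [hg]
      have a0 : ((p + 1 + (0 - 1) / 2).choose 0 : ℂ) = 1 := by simp
      have b0 : ((p + (0 - 1) / 2).choose 0 : ℂ) = 1 := by simp
      have c0 : ((p - 1 + (0 - 1) / 2).choose 0 : ℂ) = 1 := by simp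
      rw [hg0, a0, b0, c0]
      ring
    · have hg1 : g 1 = 0 := by simp [hg]
      have a1 : ((p + 1 + (1 - 1) / 2).choose 1 : ℂ) = (p : ℂ) + 1 := by
        norm_num
      have b1 : ((p + (1 - 1) / 2).choose 1 : ℂ) = (p : ℂ) := by
        norm_num
      have c1 : ((p - 1 + (1 - 1) / 2).choose 1 : ℂ) = (p : ℂ) - 1 := by
        have : p - 1 + (1 - 1) / 2 = p - 1 := by omega
        rw [this, Nat.choose_one_right, Nat.cast_sub hp, Nat.cast_one]
      rw [hg1, a1, b1, c1]
      ring
  · have e : j - 2 - 1 = j - 3 := by omega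
    have hgj : g j = ((p + (j - 3) / 2).choose (j - 2) : ℂ) := by
      simp [hg, hj2, e]
    have hC : ((p + 1 + (j - 1) / 2).choose j : ℂ) + ((p - 1 + (j - 1) / 2).choose j : ℂ)
        = 2 * ((p + (j - 1) / 2).choose j : ℂ) + ((p + (j - 3) / 2).choose (j - 2) : ℂ) := by
      exact_mod_cast coeffM p j hp hj2
    rw [hgj]
    linear_combination z ^ j * hC
end

section
/- For every integer k ≥ 1, the polynomials V_{-k} satisfy the bilinear identity V_{-k-1}(z)·V_{-k+1}(z) − (V_{-k}(z))² = z³. -/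
open Finset

lemma gen_choose (n m : ℕ) : Nat.choose (n+2) (m+2) + Nat.choose n (m+2)
    = Nat.choose n m + 2 * Nat.choose (n+1) (m+2) := by
  simp [Nat.choose_succ_succ]; ring

lemma key_choose (k j : ℕ) (hk : 1 ≤ k) (hj : 2 ≤ j) :
    Nat.choose (k+1+(j-1)/2) j + Nat.choose (k-1+(j-1)/2) j
      = Nat.choose (k+(j-3)/2) (j-2) + 2 * Nat.choose (k+(j-1)/2) j := by
  rcases Nat.lt_or_ge j 3 with h | h
  · obtain rfl : j = 2 := by omega
    have e1 : k+1+(2-1)/2 = (k-1)+2 := by omega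
    have e2 : k-1+(2-1)/2 = k-1 := by omega
    have e3 : k+(2-1)/2 = (k-1)+1 := by omega
    rw [e1, e2, e3]
    have := gen_choose (k-1) 0
    simpa using this
  · set n := k + (j-3)/2 with hn
    have e1 : k+1+(j-1)/2 = n+2 := by omega
    have e2 : k-1+(j-1)/2 = n := by omega
    have e3 : k+(j-1)/2 = n+1 := by omega
    have e4 : j = (j-2)+2 := by omega
    rw [e1, e2, e3, e4]
    have e5 : (j-2)+2-2 = j-2 := by omega
    rw [e5]
    exact gen_choose n (j-2)

lemma choose_vanish (k j : ℕ) (h1 : 1 ≤ j) (h2 : 2*k ≤ j) :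
    Nat.choose (k + (j-1)/2) j = 0 := by
  apply Nat.choose_eq_zero_of_lt; omega

lemma Vneg_ext (k n : ℕ) (h : 2*k - 1 ≤ n) (z : ℂ) :
    Vneg k z = 1 + ∑ j ∈ Finset.Icc 1 n, (Nat.choose (k + (j - 1) / 2) j : ℂ) * z ^ j := by
  unfold Vneg
  congr 1
  apply Finset.sum_subset (Finset.Icc_subset_Icc_right h)
  intro j hj hj'
  simp only [Finset.mem_Icc] at hj hj'
  rw [choose_vanish k j (by omega) (by omega)]
  simp

lemma Vrec (k : ℕ) (hk : 1 ≤ k) (z : ℂ) :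
    Vneg (k+1) z + Vneg (k-1) z = (z^2 + 2) * Vneg k z := by
  rw [Vneg_ext (k+1) (2*k+1) (by omega), Vneg_ext (k-1) (2*k+1) (by omega),
      Vneg_ext k (2*k+1) (by omega)]
  -- shift sum: z^2 * ∑_{Icc 1 (2k+1)} f k j z^j = ∑_{Icc 3 (2k+3)} C(k+(j-3)/2,(j-2)) z^j
  have hshift : z^2 * ∑ j ∈ Finset.Icc 1 (2*k+1), (Nat.choose (k + (j-1)/2) j : ℂ) * z ^ j
      = ∑ j ∈ Finset.Icc 3 (2*k+3), (Nat.choose (k + (j-3)/2) (j-2) : ℂ) * z ^ j := by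
    rw [Finset.mul_sum]
    rw [show (3:ℕ) = 1+2 from rfl, show 2*k+3 = (2*k+1)+2 by omega,
        ← Finset.map_add_right_Icc, Finset.sum_map]
    apply Finset.sum_congr rfl
    intro j hj
    simp only [addRightEmbedding_apply]
    have e1 : j+2-3 = j-1 := by omega
    have e2 : j+2-2 = j := by omega
    rw [e1, e2]
    ring
  -- truncate top two (zero) terms: Icc 3 (2k+3) → Icc 3 (2k+1)
  have htrunc : ∑ j ∈ Finset.Icc 3 (2*k+3), (Nat.choose (k + (j-3)/2) (j-2) : ℂ) * z ^ j
      = ∑ j ∈ Finset.Icc 3 (2*k+1), (Nat.choose (k + (j-3)/2) (j-2) : ℂ) * z ^ j := by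
    symm
    apply Finset.sum_subset (Finset.Icc_subset_Icc_right (by omega))
    intro j hj hj'
    simp only [Finset.mem_Icc] at hj hj'
    have : Nat.choose (k + (j-3)/2) (j-2) = 0 := by
      apply Nat.choose_eq_zero_of_lt; omega
    rw [this]; simp
  -- split off j=1 terms
  have hsplit : ∀ g : ℕ → ℂ, ∑ j ∈ Finset.Icc 1 (2*k+1), g j
      = g 1 + ∑ j ∈ Finset.Icc 2 (2*k+1), g j := by
    intro g
    have : Finset.Icc 1 (2*k+1) = insert 1 (Finset.Icc 2 (2*k+1)) := by
      ext x; simp only [Finset.mem_Icc, Finset.mem_insert]; omega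
    rw [this, Finset.sum_insert (by simp)]
  have hsplit2 : Finset.Icc 2 (2*k+1) = insert 2 (Finset.Icc 3 (2*k+1)) := by
    ext x; simp only [Finset.mem_Icc, Finset.mem_insert]; omega
  rw [htrunc] at hshift
  rw [hsplit (fun j => (Nat.choose (k + (j-1)/2) j : ℂ) * z ^ j)] at hshift
  have hIcc2 : ∑ j ∈ Finset.Icc 2 (2*k+1), (Nat.choose (k + (j-3)/2) (j-2) : ℂ) * z ^ j
      = z^2 + ∑ j ∈ Finset.Icc 3 (2*k+1), (Nat.choose (k + (j-3)/2) (j-2) : ℂ) * z ^ j := by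
    rw [hsplit2, Finset.sum_insert (by simp)]
    norm_num
  have hkey : (∑ j ∈ Finset.Icc 2 (2*k+1), (Nat.choose (k+1 + (j-1)/2) j : ℂ) * z ^ j)
        + (∑ j ∈ Finset.Icc 2 (2*k+1), (Nat.choose (k-1 + (j-1)/2) j : ℂ) * z ^ j)
      = (∑ j ∈ Finset.Icc 2 (2*k+1), (Nat.choose (k + (j-3)/2) (j-2) : ℂ) * z ^ j)
        + 2 * ∑ j ∈ Finset.Icc 2 (2*k+1), (Nat.choose (k + (j-1)/2) j : ℂ) * z ^ j := by
    rw [Finset.mul_sum, ← Finset.sum_add_distrib, ← Finset.sum_add_distrib]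
    apply Finset.sum_congr rfl
    intro j hj
    simp only [Finset.mem_Icc] at hj
    have h := key_choose k j hk hj.1
    have h' := congrArg (Nat.cast (R := ℂ)) h
    push_cast at h'
    linear_combination z ^ j * h'
  rw [hsplit (fun j => (Nat.choose (k+1 + (j-1)/2) j : ℂ) * z ^ j),
      hsplit (fun j => (Nat.choose (k-1 + (j-1)/2) j : ℂ) * z ^ j),
      hsplit (fun j => (Nat.choose (k + (j-1)/2) j : ℂ) * z ^ j)]
  have c1 : (Nat.choose (k+1 + (1-1)/2) 1 : ℂ) * z ^ 1 = ((k:ℂ)+1) * z := by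
    norm_num
  have c2 : (Nat.choose (k + (1-1)/2) 1 : ℂ) * z ^ 1 = (k:ℂ) * z := by
    norm_num
  have c3 : (Nat.choose (k-1 + (1-1)/2) 1 : ℂ) * z ^ 1 = ((k:ℂ)-1) * z := by
    have e : k-1 + (1-1)/2 = k-1 := by omega
    rw [e, Nat.choose_one_right, pow_one, Nat.cast_sub hk, Nat.cast_one]
  linear_combination hkey + hIcc2 - hshift + c1 + c3 - 2*c2

theorem stmt_5 (k : ℕ) (hk : 1 ≤ k) (z : ℂ) :
    Vneg (k + 1) z * Vneg (k - 1) z - (Vneg k z) ^ 2 = z ^ 3 := by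
  induction k, hk using Nat.le_induction with
  | base =>
    have h0 : Vneg 0 z = 1 := by simp [Vneg]
    have h1 : Vneg 1 z = 1 + z := by
      simp [Vneg, Finset.Icc_self]
    have h2 : Vneg 2 z = 1 + 2*z + z^2 + z^3 := by
      have e : Finset.Icc 1 3 = {1, 2, 3} := by decide
      rw [Vneg]
      norm_num [e, Finset.sum_insert, Finset.mem_insert]
      ring
    norm_num [h0, h1, h2]
    ring
  | succ k hk IH =>
    have h1 := Vrec (k+1) (by omega) z
    have h2 := Vrec k hk z
    simp only [Nat.add_sub_cancel] at *
    linear_combination IH + Vneg k z * h1 - Vneg (k+1) z * h2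
end

section
/- For every integer p ≥ 1, V_p(2i) = (−1)^p (2p + 1 − 2p·i), where i is the imaginary unit. -/
open Finset

noncomputable def Aaux (p : ℕ) : ℂ :=
  ∑ m ∈ Finset.range (p + 1), (Nat.choose (p + m) (2 * m) : ℂ) * (-4) ^ m

noncomputable def Baux (p : ℕ) : ℂ :=
  ∑ m ∈ Finset.range p, (Nat.choose (p + m) (2 * m + 1) : ℂ) * (-4) ^ m

lemma sum_range_even_odd (f : ℕ → ℂ) (n : ℕ) :
    ∑ j ∈ Finset.range (2 * n + 1), f j =
      (∑ m ∈ Finset.range (n + 1), f (2 * m)) +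
      ∑ m ∈ Finset.range n, f (2 * m + 1) := by
  induction n with
  | zero => simp
  | succ n ih =>
    have h1 : 2 * (n + 1) + 1 = (2 * n + 1) + 1 + 1 := by ring
    rw [h1, Finset.sum_range_succ, Finset.sum_range_succ,
      Finset.sum_range_succ (fun m => f (2 * m)) (n + 1),
      Finset.sum_range_succ (fun m => f (2 * m + 1)) n, ih]
    have e1 : 2 * (n + 1) = 2 * n + 1 + 1 := by ring
    rw [e1]
    ring

lemma Vpos_eq (p : ℕ) : Vpos p (2 * Complex.I) = Aaux p + 2 * Complex.I * Baux p := by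
  rw [Vpos, sum_range_even_odd (fun j => (Nat.choose (p + j / 2) j : ℂ) * (2 * Complex.I) ^ j) p]
  have hsq : (2 * Complex.I) ^ 2 = -4 := by
    rw [mul_pow, Complex.I_sq]; norm_num
  have he : ∀ m : ℕ, (2 * Complex.I) ^ (2 * m) = (-4 : ℂ) ^ m := by
    intro m; rw [pow_mul, hsq]
  have h1 : (∑ m ∈ Finset.range (p + 1),
      (Nat.choose (p + (2 * m) / 2) (2 * m) : ℂ) * (2 * Complex.I) ^ (2 * m)) = Aaux p := by
    apply Finset.sum_congr rfl
    intro m _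
    rw [he, Nat.mul_div_cancel_left m (by norm_num)]
  have h2 : (∑ m ∈ Finset.range p,
      (Nat.choose (p + (2 * m + 1) / 2) (2 * m + 1) : ℂ) * (2 * Complex.I) ^ (2 * m + 1)) =
      2 * Complex.I * Baux p := by
    rw [Baux, Finset.mul_sum]
    apply Finset.sum_congr rfl
    intro m _
    have hd : (2 * m + 1) / 2 = m := by omega
    rw [hd, pow_succ, pow_mul, hsq]
    ring
  rw [h1, h2]

lemma Baux_succ (p : ℕ) : Baux (p + 1) = Aaux p + Baux p := by
  have hstep : ∀ m ∈ Finset.range (p + 1),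
      (Nat.choose (p + 1 + m) (2 * m + 1) : ℂ) * (-4) ^ m =
      (Nat.choose (p + m) (2 * m) : ℂ) * (-4) ^ m +
      (Nat.choose (p + m) (2 * m + 1) : ℂ) * (-4) ^ m := by
    intro m _
    have : p + 1 + m = (p + m) + 1 := by ring
    rw [this, Nat.choose_succ_succ (p + m) (2 * m)]
    push_cast
    ring
  rw [Baux, Finset.sum_congr rfl hstep, Finset.sum_add_distrib]
  have h2 : (∑ m ∈ Finset.range (p + 1), (Nat.choose (p + m) (2 * m + 1) : ℂ) * (-4) ^ m)
      = Baux p := by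
    rw [Finset.sum_range_succ, Baux]
    have : Nat.choose (p + p) (2 * p + 1) = 0 := by
      apply Nat.choose_eq_zero_of_lt; omega
    simp [this]
  rw [h2]; rfl

lemma Aaux_succ (p : ℕ) : Aaux (p + 1) = Aaux p - 4 * Baux (p + 1) := by
  have expand : Aaux (p + 1) =
      (∑ m ∈ Finset.range (p + 1),
        (Nat.choose (p + 1 + (m + 1)) (2 * (m + 1)) : ℂ) * (-4) ^ (m + 1)) + 1 := by
    rw [Aaux, Finset.sum_range_succ']
    norm_num
  have hstep : ∀ m ∈ Finset.range (p + 1),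
      (Nat.choose (p + 1 + (m + 1)) (2 * (m + 1)) : ℂ) * (-4) ^ (m + 1) =
      (Nat.choose (p + 1 + m) (2 * m + 1) : ℂ) * (-4) ^ (m + 1) +
      (Nat.choose (p + (m + 1)) (2 * (m + 1)) : ℂ) * (-4) ^ (m + 1) := by
    intro m _
    have h1 : p + 1 + (m + 1) = (p + 1 + m) + 1 := by ring
    have h2 : 2 * (m + 1) = (2 * m + 1) + 1 := by ring
    rw [h1, h2, Nat.choose_succ_succ (p + 1 + m) (2 * m + 1)]
    have h3 : p + 1 + m = p + (m + 1) := by ring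
    rw [h3]
    push_cast
    ring
  rw [expand, Finset.sum_congr rfl hstep, Finset.sum_add_distrib]
  have hB : (∑ m ∈ Finset.range (p + 1),
      (Nat.choose (p + 1 + m) (2 * m + 1) : ℂ) * (-4) ^ (m + 1)) = -4 * Baux (p + 1) := by
    rw [Baux, Finset.mul_sum]
    apply Finset.sum_congr rfl
    intro m _
    rw [pow_succ]
    ring
  have hA : (∑ m ∈ Finset.range (p + 1),
      (Nat.choose (p + (m + 1)) (2 * (m + 1)) : ℂ) * (-4) ^ (m + 1)) = Aaux p - 1 := by
    have : Aaux p = (∑ m ∈ Finset.range p,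
        (Nat.choose (p + (m + 1)) (2 * (m + 1)) : ℂ) * (-4) ^ (m + 1)) + 1 := by
      rw [Aaux, Finset.sum_range_succ']
      norm_num
    rw [Finset.sum_range_succ]
    have hz : Nat.choose (p + (p + 1)) (2 * (p + 1)) = 0 := by
      apply Nat.choose_eq_zero_of_lt; omega
    rw [hz, this]
    push_cast
    ring
  rw [hB, hA]
  ring

lemma closed_form (p : ℕ) :
    Aaux p = (-1) ^ p * (2 * p + 1) ∧ Baux p = -((-1) ^ p) * p := by
  induction p with
  | zero => constructor <;> simp [Aaux, Baux]
  | succ p ih =>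
    obtain ⟨hA, hB⟩ := ih
    have hB' : Baux (p + 1) = -((-1) ^ (p + 1)) * ((p + 1 : ℕ) : ℂ) := by
      rw [Baux_succ, hA, hB]
      push_cast
      ring
    refine ⟨?_, hB'⟩
    rw [Aaux_succ, hA, hB']
    push_cast
    ring

theorem stmt_6 (p : ℕ) (hp : 1 ≤ p) :
    Vpos p (2 * Complex.I) =
      (-1) ^ p * (2 * p + 1 - 2 * p * Complex.I) := by
  obtain ⟨hA, hB⟩ := closed_form p
  rw [Vpos_eq, hA, hB]
  ring
end

section
/- With M_± and Z as defined, (M_±)ᵗ · σ_y · M_± · σ_y = m⁴(ℓ+m²)⁴ · I, where σ_y = [[0, −i],[i, 0]] is the Pauli matrix and ᵗ denotes transpose. Equivalently, det(M_±) = m⁴(ℓ+m²)⁴. -/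
open MvPolynomial

noncomputable section

/-- The polynomial ring ℂ[ℓ, m] realized as `MvPolynomial (Fin 2) ℂ`. -/
abbrev RC : Type := MvPolynomial (Fin 2) ℂ

/-- The variable ℓ. -/
def lvar : RC := X 0

/-- The variable m. -/
def mvar : RC := X 1

/-- The polynomial Z(ℓ,m). -/
def Zp : RC :=
  -lvar + lvar ^ 2 + 2 * lvar * mvar ^ 2 - lvar ^ 2 * mvar ^ 2 + mvar ^ 4 + lvar ^ 2 * mvar ^ 4
    - mvar ^ 6 + 2 * lvar * mvar ^ 6 + mvar ^ 8 - lvar * mvar ^ 8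

/-- The matrix M₊. -/
def Mplus : Matrix (Fin 2) (Fin 2) RC :=
  !![-Zp, -((1 - mvar ^ 2) * (lvar - mvar ^ 4));
     mvar ^ 2 * (lvar + mvar ^ 2) ^ 2 * (1 - lvar) * (1 - mvar ^ 2), -(mvar ^ 2 * (lvar + mvar ^ 2) ^ 2)]

/-- The matrix M₋. -/
def Mminus : Matrix (Fin 2) (Fin 2) RC :=
  !![mvar ^ 2 * (lvar + mvar ^ 2) ^ 2, -((1 - mvar ^ 2) * (lvar - mvar ^ 4));
     (1 - lvar) * (1 - mvar ^ 2) * mvar ^ 2 * (lvar + mvar ^ 2) ^ 2, Zp]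

/-- The Pauli matrix σ_y. -/
def sigmaY : Matrix (Fin 2) (Fin 2) RC :=
  !![0, -(C Complex.I); C Complex.I, 0]

end

lemma key' (a b c d : RC) :
    (!![a, b; c, d] : Matrix (Fin 2) (Fin 2) RC).transpose * sigmaY * !![a, b; c, d] * sigmaY
      = (!![a, b; c, d] : Matrix (Fin 2) (Fin 2) RC).det • (1 : Matrix (Fin 2) (Fin 2) RC) := by
  have hI : (C Complex.I : RC) ^ 2 = -1 := by
    rw [sq, ← C_mul, Complex.I_mul_I, map_neg, map_one]
  refine Matrix.ext fun i j => ?_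
  fin_cases i <;> fin_cases j <;>
    simp [sigmaY, Matrix.mul_apply, Fin.sum_univ_two, Matrix.one_apply,
      Matrix.det_fin_two_of, Matrix.transpose_apply, Matrix.vecHead, Matrix.vecTail] <;>
    (try ring_nf) <;> (try simp only [hI]) <;> ring

lemma key_s9 (A : Matrix (Fin 2) (Fin 2) RC) :
    A.transpose * sigmaY * A * sigmaY = A.det • (1 : Matrix (Fin 2) (Fin 2) RC) := by
  rw [Matrix.eta_fin_two A]; exact key' _ _ _ _

theorem stmt_9 :
    (Mplus.transpose * sigmaY * Mplus * sigmaY =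
        (mvar ^ 4 * (lvar + mvar ^ 2) ^ 4) • (1 : Matrix (Fin 2) (Fin 2) RC) ∧
      Mminus.transpose * sigmaY * Mminus * sigmaY =
        (mvar ^ 4 * (lvar + mvar ^ 2) ^ 4) • (1 : Matrix (Fin 2) (Fin 2) RC)) ∧
    (Mplus.det = mvar ^ 4 * (lvar + mvar ^ 2) ^ 4 ∧
      Mminus.det = mvar ^ 4 * (lvar + mvar ^ 2) ^ 4) := by
  have hp : Mplus.det = mvar ^ 4 * (lvar + mvar ^ 2) ^ 4 := by
    simp only [Mplus, Zp, Matrix.det_fin_two_of]; ring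
  have hm : Mminus.det = mvar ^ 4 * (lvar + mvar ^ 2) ^ 4 := by
    simp only [Mminus, Zp, Matrix.det_fin_two_of]; ring
  exact ⟨⟨hp ▸ key_s9 Mplus, hm ▸ key_s9 Mminus⟩, hp, hm⟩
end

section
/- For every integer k ≥ 1, V_k(z) = ₂F₁(−k, k+1; 1/2; −z²/4) + k·z·₂F₁(1−k, k+1; 3/2; −z²/4), where the hypergeometric series terminate (they are polynomials since −k and 1−k are nonpositive integers). -/
open Finset

/-- The Gauss hypergeometric series `₂F₁(a,b;c;w) = Σ_{n≥0} (a)ₙ(b)ₙ/((c)ₙ n!) wⁿ`,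
defined via `tsum` (when `a` is a nonpositive integer the series terminates). -/
noncomputable def hyp2F1 (a b c w : ℂ) : ℂ :=
  ∑' n : ℕ, ((ascPochhammer ℂ n).eval a * (ascPochhammer ℂ n).eval b) /
    ((ascPochhammer ℂ n).eval c * (n.factorial : ℂ)) * w ^ n

/-!
Split `V_k` into its even part, with coefficients `C(k+n, 2n)`, and its odd part, with
coefficients `C(k+n, 2n+1)`. Both hypergeometric series terminate, since
`(-m)ₙ = (-1)ⁿ m(m-1)⋯(m-n+1)`, and the sign cancels against that of `(-z²/4)ⁿ`. The
duplication formula turns `4ⁿ (1/2)ₙ n!` and `4ⁿ (3/2)ₙ n!` into `(2n)!` and `(2n+1)!`, while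
`(k+1)ₙ` times the falling factorial of `k` (resp. `k` times that of `k-1`) is the falling
factorial of `k+n` of length `2n` (resp. `2n+1`), i.e. that factorial times the binomial
coefficient.
-/

open Nat Polynomial

theorem Finset.sum_range_two_mul_add_one {M : Type*} [AddCommMonoid M] (f : ℕ → M) (m : ℕ) :
    ∑ j ∈ range (2 * m + 1), f j =
      ∑ n ∈ range (m + 1), f (2 * n) + ∑ n ∈ range m, f (2 * n + 1) := by
  induction m with
  | zero => simp
  | succ m ih =>
    rw [show 2 * (m + 1) + 1 = 2 * m + 1 + 1 + 1 by ring, sum_range_succ, sum_range_succ, ih,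
      sum_range_succ _ (m + 1), sum_range_succ (fun n ↦ f (2 * n + 1))]
    abel

theorem Nat.descFactorial_mul_add_descFactorial (k i j : ℕ) :
    k.descFactorial j * (k + i).descFactorial i = (i + j)! * (k + i).choose (i + j) := by
  have h := descFactorial_mul_descFactorial (n := k + i) (Nat.le_add_right i j)
  rw [Nat.add_sub_cancel, Nat.add_sub_cancel_left] at h
  rw [h, descFactorial_eq_factorial_mul_choose]

/-- Legendre's duplication formula for rising factorials. -/
theorem ascPochhammer_two_mul_eval_two_mul {R : Type*} [CommRing R] {x y : R}
    (hxy : 2 * y = 2 * x + 1) (n : ℕ) :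
    (ascPochhammer R (2 * n)).eval (2 * x) =
      4 ^ n * ((ascPochhammer R n).eval x * (ascPochhammer R n).eval y) := by
  induction n with
  | zero => simp
  | succ n ih =>
    rw [show 2 * (n + 1) = 2 * n + 1 + 1 by ring, ascPochhammer_succ_eval, ascPochhammer_succ_eval,
      ih, ascPochhammer_succ_eval, ascPochhammer_succ_eval]
    push_cast
    linear_combination -(4 ^ n * (ascPochhammer R n).eval x * (ascPochhammer R n).eval y *
      (2 * x + 2 * n)) * hxy

theorem four_pow_mul_ascPochhammer_eval_half {K : Type*} [Field K] [CharZero K] (n : ℕ) :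
    4 ^ n * ((ascPochhammer K n).eval (1 / 2) * n !) = (2 * n)! := by
  have h := ascPochhammer_two_mul_eval_two_mul (R := K) (x := 1 / 2) (y := 1) (by norm_num) n
  rwa [mul_one_div_cancel two_ne_zero, ascPochhammer_eval_one, ascPochhammer_eval_one, eq_comm] at h

theorem four_pow_mul_ascPochhammer_eval_three_halves {K : Type*} [Field K] [CharZero K] (n : ℕ) :
    4 ^ n * ((ascPochhammer K n).eval (3 / 2) * n !) = (2 * n + 1)! := by
  have h := ascPochhammer_two_mul_eval_two_mul (R := K) (x := 1) (y := 3 / 2) (by norm_num) n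
  have h2 := factorial_mul_ascPochhammer K 1 (2 * n)
  rw [ascPochhammer_eval_one, mul_one] at h
  rw [factorial_one, cast_one, one_mul, one_add_one_eq_two, add_comm 1] at h2
  rw [mul_comm _ (n ! : K), ← h, h2]

theorem ascPochhammer_eval_natCast_add_one {S : Type*} [Semiring S] (k n : ℕ) :
    (ascPochhammer S n).eval ((k : S) + 1) = (k + n).descFactorial n := by
  have h := ascPochhammer_nat_eq_natCast_descFactorial S (k + 1) n
  rwa [Nat.cast_succ, show k + 1 + n - 1 = k + n by omega] at h

theorem hyp2F1_neg_natCast (m : ℕ) (b c w : ℂ) :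
    hyp2F1 (-m) b c w = ∑ n ∈ range (m + 1),
      (-1) ^ n * m.descFactorial n * (ascPochhammer ℂ n).eval b /
        ((ascPochhammer ℂ n).eval c * n !) * w ^ n := by
  rw [hyp2F1, tsum_eq_sum (s := range (m + 1))]
  · refine sum_congr rfl fun n _ ↦ ?_
    rw [ascPochhammer_eval_neg_eq_descPochhammer, descPochhammer_eval_eq_descFactorial]
  · intro n hn
    rw [ascPochhammer_eval_neg_eq_descPochhammer, descPochhammer_eval_eq_descFactorial,
      descFactorial_eq_zero_iff_lt.mpr (by simpa using hn)]
    simp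

theorem hyp2F1_neg_natCast_neg_sq_div_four (m : ℕ) (b c z : ℂ) :
    hyp2F1 (-m) b c (-z ^ 2 / 4) = ∑ n ∈ range (m + 1),
      m.descFactorial n * (ascPochhammer ℂ n).eval b /
        (4 ^ n * ((ascPochhammer ℂ n).eval c * n !)) * z ^ (2 * n) := by
  rw [hyp2F1_neg_natCast]
  refine sum_congr rfl fun n _ ↦ ?_
  have hsign : ((-1 : ℂ) ^ n) ^ 2 = 1 := by rw [← pow_mul, mul_comm, pow_mul]; norm_num
  rw [div_pow, neg_pow (z ^ 2), ← pow_mul]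
  linear_combination (m.descFactorial n * (ascPochhammer ℂ n).eval b /
    (4 ^ n * ((ascPochhammer ℂ n).eval c * n !)) * z ^ (2 * n)) * hsign

theorem Vpos_eq_sum_even_add_sum_odd (k : ℕ) (z : ℂ) :
    Vpos k z = ∑ n ∈ range (k + 1), ((k + n).choose (2 * n) : ℂ) * z ^ (2 * n) +
      z * ∑ n ∈ range k, ((k + n).choose (2 * n + 1) : ℂ) * z ^ (2 * n) := by
  rw [Vpos, sum_range_two_mul_add_one, mul_sum]
  congr 1 <;> refine sum_congr rfl fun n _ ↦ ?_
  · rw [Nat.mul_div_cancel_left n two_pos]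
  · rw [show (2 * n + 1) / 2 = n by omega, pow_succ]
    ring

theorem hyp2F1_neg_natCast_half_neg_sq_div_four (k : ℕ) (z : ℂ) :
    hyp2F1 (-(k : ℂ)) ((k : ℂ) + 1) (1 / 2) (-z ^ 2 / 4) =
      ∑ n ∈ range (k + 1), ((k + n).choose (2 * n) : ℂ) * z ^ (2 * n) := by
  rw [hyp2F1_neg_natCast_neg_sq_div_four]
  refine sum_congr rfl fun n _ ↦ ?_
  have h := descFactorial_mul_add_descFactorial k n n
  rw [← two_mul] at h
  rw [ascPochhammer_eval_natCast_add_one, four_pow_mul_ascPochhammer_eval_half, ← cast_mul, h,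
    cast_mul, mul_div_cancel_left₀ _ (cast_ne_zero.mpr (factorial_ne_zero _))]

theorem mul_hyp2F1_neg_natCast_three_halves_neg_sq_div_four (m : ℕ) (z : ℂ) :
    ((m + 1 : ℕ) : ℂ) * hyp2F1 (-(m : ℂ)) ((m + 1 : ℕ) + 1) (3 / 2) (-z ^ 2 / 4) =
      ∑ n ∈ range (m + 1), ((m + 1 + n).choose (2 * n + 1) : ℂ) * z ^ (2 * n) := by
  rw [hyp2F1_neg_natCast_neg_sq_div_four, mul_sum]
  refine sum_congr rfl fun n _ ↦ ?_
  have h := descFactorial_mul_add_descFactorial (m + 1) n (n + 1)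
  rw [succ_descFactorial_succ, show n + (n + 1) = 2 * n + 1 by ring] at h
  rw [ascPochhammer_eval_natCast_add_one, four_pow_mul_ascPochhammer_eval_three_halves,
    ← mul_assoc, ← mul_div_assoc, ← mul_assoc, ← cast_mul, ← cast_mul, h, cast_mul,
    mul_div_cancel_left₀ _ (cast_ne_zero.mpr (factorial_ne_zero _))]

theorem stmt_19 (k : ℕ) (hk : 1 ≤ k) (z : ℂ) :
    Vpos k z =
      hyp2F1 (-(k : ℂ)) ((k : ℂ) + 1) (1 / 2) (-z ^ 2 / 4) +
        (k : ℂ) * z * hyp2F1 (1 - (k : ℂ)) ((k : ℂ) + 1) (3 / 2) (-z ^ 2 / 4) := by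
  obtain ⟨m, rfl⟩ : ∃ m, k = m + 1 := ⟨k - 1, by omega⟩
  rw [show 1 - ((m + 1 : ℕ) : ℂ) = -(m : ℂ) by push_cast; ring, Vpos_eq_sum_even_add_sum_odd,
    hyp2F1_neg_natCast_half_neg_sq_div_four, mul_comm _ z, mul_assoc,
    mul_hyp2F1_neg_natCast_three_halves_neg_sq_div_four]
end
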